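/- The quantum relative entropy is super-additive with respect to product second arguments: for any bipartite density operator ρ₁₂ on H₁⊗H₂ with marginals ρ₁ = Tr₂ ρ₁₂ and ρ₂ = Tr₁ ρ₁₂, and full-rank states σ₁ on H₁ and σ₂ on H₂, S(ρ₁₂ ‖ σ₁⊗σ₂) ≥ S(ρ₁‖σ₁) + S(ρ₂‖σ₂). -/

import Mathlib

open Matrix
open scoped Kronecker ComplexOrder

noncomputable section

/-- Matrix logarithm via spectral decomposition (0 for non-Hermitian input). -/
def mlog {d : Type*} [Fintype d] [DecidableEq d] (A : Matrix d d ℂ) : Matrix d d ℂ :=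
  if h : A.IsHermitian then
    (h.eigenvectorUnitary : Matrix d d ℂ) *
      Matrix.diagonal (fun i => (Real.log (h.eigenvalues i) : ℂ)) *
      (star (h.eigenvectorUnitary : Matrix d d ℂ))
  else 0

/-- Quantum relative entropy S(ρ‖σ) = Tr(ρ log ρ − ρ log σ). -/
def relEnt {d : Type*} [Fintype d] [DecidableEq d] (ρ σ : Matrix d d ℂ) : ℝ :=
  (Matrix.trace (ρ * mlog ρ - ρ * mlog σ)).re

/-- Von Neumann entropy S(ρ) = −Tr(ρ log ρ). -/
def vnEnt {d : Type*} [Fintype d] [DecidableEq d] (ρ : Matrix d d ℂ) : ℝ :=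
  -(Matrix.trace (ρ * mlog ρ)).re

/-- ρ is a density operator. -/
def IsDensity {d : Type*} [Fintype d] (ρ : Matrix d d ℂ) : Prop :=
  ρ.PosSemidef ∧ ρ.trace = 1

/-- Full-rank density operator. -/
def IsFaithfulState {d : Type*} [Fintype d] (σ : Matrix d d ℂ) : Prop :=
  σ.PosDef ∧ σ.trace = 1

/-- Apply a linear map blockwise (i.e. (id_k ⊗ T)). -/
def blockApply {d e : Type*} [Fintype d] [DecidableEq d] [Fintype e] [DecidableEq e]
    (T : Matrix d d ℂ →ₗ[ℂ] Matrix e e ℂ) {k : Type*}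
    (M : Matrix (k × d) (k × d) ℂ) : Matrix (k × e) (k × e) ℂ :=
  Matrix.of fun p q => T (Matrix.of fun i j => M (p.1, i) (q.1, j)) p.2 q.2

/-- Quantum channel: trace preserving and completely positive. -/
def IsQChannel {d e : Type*} [Fintype d] [DecidableEq d] [Fintype e] [DecidableEq e]
    (T : Matrix d d ℂ →ₗ[ℂ] Matrix e e ℂ) : Prop :=
  (∀ M : Matrix d d ℂ, (T M).trace = M.trace) ∧
  (∀ (k : Type) [Fintype k] [DecidableEq k] (M : Matrix (k × d) (k × d) ℂ),
      M.PosSemidef → (blockApply T M).PosSemidef)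

/-- Gibbs state ω_{β,H} = e^{−βH}/Tr e^{−βH}. -/
def gibbs {d : Type*} [Fintype d] [DecidableEq d] (β : ℝ) (H : Matrix d d ℂ) :
    Matrix d d ℂ :=
  (Matrix.trace (NormedSpace.exp ((-β : ℂ) • H)))⁻¹ • NormedSpace.exp ((-β : ℂ) • H)

/-- Non-equilibrium free energy difference ΔF_β(ρ,H) = (1/β) S(ρ‖ω_{β,H}). -/
def dF {d : Type*} [Fintype d] [DecidableEq d] (β : ℝ) (ρ H : Matrix d d ℂ) : ℝ :=
  (1 / β) * relEnt ρ (gibbs β H)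

/-- Partial trace over the second factor. -/
def ptraceRight {d₁ d₂ : Type*} [Fintype d₂]
    (M : Matrix (d₁ × d₂) (d₁ × d₂) ℂ) : Matrix d₁ d₁ ℂ :=
  Matrix.of fun i j => ∑ k, M (i, k) (j, k)

/-- Partial trace over the first factor. -/
def ptraceLeft {d₁ d₂ : Type*} [Fintype d₁]
    (M : Matrix (d₁ × d₂) (d₁ × d₂) ℂ) : Matrix d₂ d₂ ℂ :=
  Matrix.of fun i j => ∑ k, M (k, i) (k, j)

/-- n-fold tensor power of a matrix. -/
def tpow {d : Type*} [Fintype d] (ρ : Matrix d d ℂ) (n : ℕ) :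
    Matrix (Fin n → d) (Fin n → d) ℂ :=
  Matrix.of fun a b => ∏ i, ρ (a i) (b i)

/-- Tensor product of a finite family of matrices. -/
def tprodFam {k : ℕ} {c : Type*} [Fintype c] (γ : Fin k → Matrix c c ℂ) :
    Matrix (Fin k → c) (Fin k → c) ℂ :=
  Matrix.of fun a b => ∏ i, γ i (a i) (b i)

/-- Single-site marginal at site i of a state on an n-fold tensor product. -/
def marginal {d : Type*} [Fintype d] [DecidableEq d] {n : ℕ}
    (M : Matrix (Fin n → d) (Fin n → d) ℂ) (i : Fin n) : Matrix d d ℂ :=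
  Matrix.of fun a b => ∑ g : {j : Fin n // j ≠ i} → d,
    M (fun j => if h : j = i then a else g ⟨j, h⟩)
      (fun j => if h : j = i then b else g ⟨j, h⟩)

/-- Trace norm of a matrix: sum of singular values. -/
def traceNorm {d : Type*} [Fintype d] [DecidableEq d] (A : Matrix d d ℂ) : ℝ :=
  ∑ i, Real.sqrt ((Matrix.posSemidef_conjTranspose_mul_self A).1.eigenvalues i)



/-!
Faithful `σ₁, σ₂` have `log (σ₁ ⊗ σ₂) = log σ₁ ⊗ 1 + 1 ⊗ log σ₂`, so the claim is equivalent to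
subadditivity of the von Neumann entropy, `S(ρ₁₂) ≤ S(ρ₁) + S(ρ₂)`.

For subadditivity, let `W = U₁ ⊗ U₂` diagonalize `ρ₁ ⊗ ρ₂`, with spectrum `t = λ ⊗ μ`. The diagonal
`p` of `W⋆ ρ₁₂ W` has marginals `λ` and `μ`, and `p = r C` where `r` is the spectrum of `ρ₁₂` and
`C = |V⋆ W|²` is doubly stochastic (`V` an eigenbasis of `ρ₁₂`). Averaging the scalar Klein
inequality `r log t ≤ r log r + t - r` over `C` gives `∑ p log t ≤ ∑ r log r`, and the left side is
`∑ λ log λ + ∑ μ log μ`. Zero eigenvalues of the marginals (where `Real.log 0 = 0`) do no harm,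
because `p` vanishes wherever `λ_i μ_j` does.
-/

section Scalar

theorem Real.mul_log_le_mul_log_add_sub {r t : ℝ} (hr : 0 ≤ r) (ht : 0 ≤ t)
    (hrt : t = 0 → r = 0) : r * Real.log t ≤ r * Real.log r + t - r := by
  rcases hr.eq_or_lt with rfl | hr
  · simpa using ht
  have ht : 0 < t := ht.lt_of_ne fun h => hr.ne' (hrt h.symm)
  have := mul_le_mul_of_nonneg_left (Real.log_le_sub_one_of_pos (div_pos ht hr)) hr.le
  rw [Real.log_div ht.ne' hr.ne', mul_sub, mul_sub, mul_div_cancel₀ _ hr.ne'] at this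
  linarith

theorem sum_vecMul_mul_log_le {n : Type*} [Fintype n] [DecidableEq n] {c : Matrix n n ℝ}
    (hc : c ∈ doublyStochastic ℝ n) {r t : n → ℝ} (hr : 0 ≤ r) (ht : 0 ≤ t)
    (hsum : ∑ q, t q = ∑ k, r k) (hsupp : ∀ q, t q = 0 → (r ᵥ* c) q = 0) :
    ∑ q, (r ᵥ* c) q * Real.log (t q) ≤ ∑ k, r k * Real.log (r k) := by
  have hterm (k q : n) :
      c k q * (r k * Real.log (t q)) ≤ c k q * (r k * Real.log (r k) + t q - r k) := by
    rcases (nonneg_of_mem_doublyStochastic hc).eq_or_lt with hckq | hckq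
    · rw [← hckq, zero_mul, zero_mul]
    refine mul_le_mul_of_nonneg_left (Real.mul_log_le_mul_log_add_sub (hr k) (ht q) fun h0 => ?_)
      hckq.le
    have := (Finset.sum_eq_zero_iff_of_nonneg fun k _ =>
      mul_nonneg (hr k) (nonneg_of_mem_doublyStochastic hc)).mp (hsupp q h0) k (Finset.mem_univ k)
    exact (mul_eq_zero.mp this).resolve_right hckq.ne'
  calc ∑ q, (r ᵥ* c) q * Real.log (t q)
      = ∑ k, ∑ q, c k q * (r k * Real.log (t q)) := by
        simp only [vecMul, dotProduct, Finset.sum_mul]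
        rw [Finset.sum_comm]
        congr! 2
        ring
    _ ≤ ∑ k, ∑ q, c k q * (r k * Real.log (r k) + t q - r k) :=
        Finset.sum_le_sum fun k _ => Finset.sum_le_sum fun q _ => hterm k q
    _ = ∑ k, r k * Real.log (r k) + ∑ q, t q - ∑ k, r k := by
        simp only [mul_sub, mul_add, Finset.sum_sub_distrib, Finset.sum_add_distrib,
          ← Finset.sum_mul, sum_row_of_mem_doublyStochastic hc, one_mul]
        rw [Finset.sum_comm (f := fun k q => c k q * t q)]
        simp only [← Finset.sum_mul, sum_col_of_mem_doublyStochastic hc, one_mul]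
    _ = ∑ k, r k * Real.log (r k) := by rw [hsum]; ring

variable {ι κ : Type*} [Fintype ι] [Fintype κ] {p : ι × κ → ℝ} {a : ι → ℝ} {b : κ → ℝ}

theorem eq_zero_of_mul_marginals_eq_zero (hp : 0 ≤ p) (ha : ∀ i, ∑ j, p (i, j) = a i)
    (hb : ∀ j, ∑ i, p (i, j) = b j) {q : ι × κ} (hq : a q.1 * b q.2 = 0) : p q = 0 := by
  have hpa : p q ≤ a q.1 :=
    ha q.1 ▸ Finset.single_le_sum (fun j _ => hp (q.1, j)) (Finset.mem_univ q.2)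
  have hpb : p q ≤ b q.2 :=
    hb q.2 ▸ Finset.single_le_sum (fun i _ => hp (i, q.2)) (Finset.mem_univ q.1)
  rcases mul_eq_zero.mp hq with h | h
  · exact le_antisymm (h ▸ hpa) (hp q)
  · exact le_antisymm (h ▸ hpb) (hp q)

theorem sum_mul_log_mul_marginals (hp : 0 ≤ p) (ha : ∀ i, ∑ j, p (i, j) = a i)
    (hb : ∀ j, ∑ i, p (i, j) = b j) :
    ∑ q, p q * Real.log (a q.1 * b q.2) =
      ∑ i, a i * Real.log (a i) + ∑ j, b j * Real.log (b j) := by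
  have hsplit (q : ι × κ) :
      p q * Real.log (a q.1 * b q.2) = p q * Real.log (a q.1) + p q * Real.log (b q.2) := by
    by_cases h : a q.1 * b q.2 = 0
    · simp [eq_zero_of_mul_marginals_eq_zero hp ha hb h]
    · rw [Real.log_mul (left_ne_zero_of_mul h) (right_ne_zero_of_mul h), mul_add]
  simp only [hsplit, Finset.sum_add_distrib, Fintype.sum_prod_type, ← Finset.sum_mul, ha]
  rw [Finset.sum_comm]
  simp only [← Finset.sum_mul, hb]

end Scalar

section Spectral

variable {n : Type*} [Fintype n] [DecidableEq n]

theorem normSq_mem_doublyStochastic {U : Matrix n n ℂ} (hU : U ∈ unitaryGroup n ℂ) :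
    (of fun i j => Complex.normSq (U i j)) ∈ doublyStochastic ℝ n := by
  have hrow (i : n) : ∑ j, (Complex.normSq (U i j) : ℂ) = 1 := by
    simpa [mul_apply, Complex.mul_conj] using congr_fun₂ (mem_unitaryGroup_iff.mp hU) i i
  have hcol (j : n) : ∑ i, (Complex.normSq (U i j) : ℂ) = 1 := by
    simpa [mul_apply, Complex.normSq_eq_conj_mul_self]
      using congr_fun₂ (mem_unitaryGroup_iff'.mp hU) j j
  refine mem_doublyStochastic_iff_sum.mpr
    ⟨fun i j => Complex.normSq_nonneg _, fun i => ?_, fun j => ?_⟩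
  · exact_mod_cast hrow i
  · exact_mod_cast hcol j

theorem star_mul_diagonal_mul_apply_self (T : Matrix n n ℂ) (r : n → ℝ) (q : n) :
    (star T * diagonal (fun k => (r k : ℂ)) * T) q q =
      ((r ᵥ* of fun k q => Complex.normSq (T k q)) q : ℝ) := by
  rw [mul_apply]
  simp only [mul_diagonal, vecMul, dotProduct, of_apply, Complex.ofReal_sum, Complex.ofReal_mul,
    star_apply]
  refine Finset.sum_congr rfl fun k _ => ?_
  rw [Complex.normSq_eq_conj_mul_self, Complex.star_def]
  ring

theorem Matrix.IsHermitian.eq_conj_diagonal_eigenvalues {A : Matrix n n ℂ} (hA : A.IsHermitian) :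
    A = (hA.eigenvectorUnitary : Matrix n n ℂ) * diagonal (fun i => (hA.eigenvalues i : ℂ)) *
      star (hA.eigenvectorUnitary : Matrix n n ℂ) := by
  conv_lhs => rw [hA.spectral_theorem, Unitary.conjStarAlgAut_apply]
  rfl

theorem Matrix.IsHermitian.star_eigenvectorUnitary_mul_mul {A : Matrix n n ℂ}
    (hA : A.IsHermitian) :
    star (hA.eigenvectorUnitary : Matrix n n ℂ) * A * hA.eigenvectorUnitary =
      diagonal (fun i => (hA.eigenvalues i : ℂ)) := by
  have := hA.conjStarAlgAut_star_eigenvectorUnitary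
  rwa [Unitary.conjStarAlgAut_apply, Unitary.coe_star, star_star] at this

def diagonalStarAlgHom : (n → ℂ) →⋆ₐ[ℂ] Matrix n n ℂ :=
  { Matrix.diagonalAlgHom ℂ with map_star' := fun v => (diagonal_conjTranspose v).symm }

theorem cfc_diagonal (f : ℝ → ℝ) (v : n → ℝ) :
    cfc f (diagonal fun i => (v i : ℂ)) = diagonal fun i => (f (v i) : ℂ) := by
  -- instance search does not find the real functional calculus of the C⋆-algebra `n → ℂ`
  let _ : ContinuousFunctionalCalculus ℝ (n → ℂ) IsSelfAdjoint :=
    IsSelfAdjoint.instContinuousFunctionalCalculus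
  have hv : IsSelfAdjoint (fun i => (v i : ℂ)) := by ext i; simp
  have hfin : (spectrum ℝ fun i => (v i : ℂ)).Finite := by
    rw [Pi.spectrum_eq]
    refine Set.finite_iUnion fun i => ?_
    rw [← Complex.coe_algebraMap, spectrum.scalar_eq]
    exact Set.finite_singleton _
  have h := (diagonalStarAlgHom (n := n)).map_cfc f (fun i => (v i : ℂ))
    (hfin.continuousOn _) (Continuous.matrix_diagonal continuous_id) hv
    (isHermitian_diagonal_of_self_adjoint _ hv)
  rw [← show diagonalStarAlgHom (fun i => (v i : ℂ)) = diagonal fun i => (v i : ℂ) from rfl, ← h,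
    cfc_map_pi (S := ℂ) (q := fun _ => IsSelfAdjoint) f _
      (by rw [← Pi.spectrum_eq]; exact hfin.continuousOn _) hv fun i => Complex.conj_ofReal (v i)]
  simp only [← Complex.coe_algebraMap, cfc_algebraMap]
  rfl

theorem cfc_conj_diagonal (f : ℝ → ℝ) {U : Matrix n n ℂ} (hU : U ∈ unitaryGroup n ℂ)
    (v : n → ℝ) :
    cfc f (U * diagonal (fun i => (v i : ℂ)) * star U) =
      U * diagonal (fun i => (f (v i) : ℂ)) * star U := by
  set φ := Unitary.conjStarAlgAut ℂ (Matrix n n ℂ) ⟨U, hU⟩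
  have hφ_apply (A : Matrix n n ℂ) : φ A = U * A * star U := Unitary.conjStarAlgAut_apply ..
  have hφ : Continuous φ := by
    rw [show ⇑φ = fun A => U * A * star U from funext hφ_apply]
    fun_prop
  have hv : (diagonal fun i => (v i : ℂ)).IsHermitian :=
    isHermitian_diagonal_of_self_adjoint _ (by ext i; simp)
  have := StarAlgHomClass.map_cfc (S := ℂ) φ f (diagonal fun i => (v i : ℂ))
    (finite_real_spectrum.continuousOn _) hφ hv
    (by rw [hφ_apply, star_eq_conjTranspose]; exact isHermitian_mul_mul_conjTranspose U hv)
  rwa [hφ_apply, hφ_apply, cfc_diagonal, eq_comm] at this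

theorem mlog_eq_cfc {A : Matrix n n ℂ} (hA : A.IsHermitian) : mlog A = cfc Real.log A := by
  rw [hA.cfc_eq, IsHermitian.cfc, Unitary.conjStarAlgAut_apply, mlog, dif_pos hA]
  rfl

theorem mlog_conj_diagonal {U : Matrix n n ℂ} (hU : U ∈ unitaryGroup n ℂ) (v : n → ℝ) :
    mlog (U * diagonal (fun i => (v i : ℂ)) * star U) =
      U * diagonal (fun i => (Real.log (v i) : ℂ)) * star U := by
  have hv : (diagonal fun i => (v i : ℂ)).IsHermitian :=
    isHermitian_diagonal_of_self_adjoint _ (by ext i; simp)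
  rw [mlog_eq_cfc (by simpa [star_eq_conjTranspose] using isHermitian_mul_mul_conjTranspose U hv),
    cfc_conj_diagonal _ hU]

theorem Matrix.IsHermitian.trace_cfc {A : Matrix n n ℂ} (hA : A.IsHermitian) (f : ℝ → ℝ) :
    (cfc f A).trace = ∑ i, (f (hA.eigenvalues i) : ℂ) := by
  rw [hA.cfc_eq, IsHermitian.cfc, Unitary.conjStarAlgAut_apply, trace_mul_cycle,
    Unitary.star_mul_self_of_mem hA.eigenvectorUnitary.2, one_mul, trace_diagonal]
  rfl

theorem Matrix.IsHermitian.re_trace_mul_mlog_self {A : Matrix n n ℂ} (hA : A.IsHermitian) :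
    (A * mlog A).trace.re = ∑ i, hA.eigenvalues i * Real.log (hA.eigenvalues i) := by
  have hcont (f : ℝ → ℝ) : ContinuousOn f (spectrum ℝ A) := finite_real_spectrum.continuousOn f
  have hmul : A * cfc Real.log A = cfc (fun x => x * Real.log x) A := by
    rw [cfc_mul (fun x => x) Real.log A (hcont _) (hcont _), cfc_id' ℝ A]
  rw [mlog_eq_cfc hA, hmul, hA.trace_cfc, Complex.re_sum]
  simp only [Complex.ofReal_re]

/-- Klein's inequality `Tr ρ log ρ ≥ Tr ρ log σ`, for `σ = W diag(t) W⋆`, written through the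
diagonal of `W⋆ ρ W` so that it also makes sense when `σ` is singular. -/
theorem sum_re_diag_conj_mul_log_le {ρ : Matrix n n ℂ} (hρ : ρ.PosSemidef) {W : Matrix n n ℂ}
    (hW : W ∈ unitaryGroup n ℂ) {t : n → ℝ} (ht : 0 ≤ t) (hsum : ∑ q, (t q : ℂ) = ρ.trace)
    (hsupp : ∀ q, t q = 0 → ((star W * ρ * W) q q).re = 0) :
    ∑ q, ((star W * ρ * W) q q).re * Real.log (t q) ≤ (ρ * mlog ρ).trace.re := by
  set V : Matrix n n ℂ := ↑hρ.isHermitian.eigenvectorUnitary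
  have hT : star V * W ∈ unitaryGroup n ℂ :=
    mul_mem (Unitary.star_mem hρ.isHermitian.eigenvectorUnitary.2) hW
  have hconj : star W * ρ * W =
      star (star V * W) * diagonal (fun k => (hρ.isHermitian.eigenvalues k : ℂ)) *
        (star V * W) := by
    conv_lhs => rw [hρ.isHermitian.eq_conj_diagonal_eigenvalues]
    simp only [star_mul, star_star, mul_assoc]
    rfl
  have hdiag (q : n) : (star W * ρ * W) q q = ((hρ.isHermitian.eigenvalues ᵥ*
      of fun k q => Complex.normSq ((star V * W) k q)) q : ℝ) := by
    rw [hconj]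
    exact star_mul_diagonal_mul_apply_self _ _ q
  simp only [hdiag, Complex.ofReal_re] at hsupp ⊢
  rw [hρ.isHermitian.re_trace_mul_mlog_self]
  refine sum_vecMul_mul_log_le (normSq_mem_doublyStochastic hT) hρ.eigenvalues_nonneg ht ?_ hsupp
  exact Complex.ofReal_injective
    (by push_cast; exact hsum.trans hρ.isHermitian.trace_eq_sum_eigenvalues)

end Spectral

section PartialTrace

variable {d₁ d₂ : Type*}

theorem Matrix.PosSemidef.ptraceRight [Fintype d₂] {M : Matrix (d₁ × d₂) (d₁ × d₂) ℂ}
    (hM : M.PosSemidef) : (ptraceRight M).PosSemidef := by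
  have : _root_.ptraceRight M = ∑ k, M.submatrix (·, k) (·, k) := by
    ext i j
    simp [_root_.ptraceRight, sum_apply]
  exact this ▸ posSemidef_sum _ fun k _ => hM.submatrix _

theorem Matrix.PosSemidef.ptraceLeft [Fintype d₁] {M : Matrix (d₁ × d₂) (d₁ × d₂) ℂ}
    (hM : M.PosSemidef) : (ptraceLeft M).PosSemidef := by
  have : _root_.ptraceLeft M = ∑ k, M.submatrix (k, ·) (k, ·) := by
    ext i j
    simp [_root_.ptraceLeft, sum_apply]
  exact this ▸ posSemidef_sum _ fun k _ => hM.submatrix _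

theorem star_kronecker (A : Matrix d₁ d₁ ℂ) (B : Matrix d₂ d₂ ℂ) :
    star (A ⊗ₖ B) = star A ⊗ₖ star B := by
  rw [star_eq_conjTranspose, conjTranspose_kronecker]
  rfl

variable [Fintype d₁] [Fintype d₂]

theorem trace_ptraceRight (M : Matrix (d₁ × d₂) (d₁ × d₂) ℂ) :
    (ptraceRight M).trace = M.trace := by
  simp [trace, ptraceRight, Fintype.sum_prod_type]

theorem trace_ptraceLeft (M : Matrix (d₁ × d₂) (d₁ × d₂) ℂ) :
    (ptraceLeft M).trace = M.trace := by
  simp only [trace, diag, ptraceLeft, of_apply, Fintype.sum_prod_type]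
  exact Finset.sum_comm

theorem ptraceRight_mul_kronecker_one [DecidableEq d₂] (M : Matrix (d₁ × d₂) (d₁ × d₂) ℂ)
    (A : Matrix d₁ d₁ ℂ) : ptraceRight (M * (A ⊗ₖ 1)) = ptraceRight M * A := by
  ext i j
  simp only [ptraceRight, of_apply, mul_apply, Fintype.sum_prod_type, kroneckerMap_apply,
    one_apply, mul_ite, mul_one, mul_zero, Finset.sum_ite_eq', Finset.mem_univ, if_true,
    Finset.sum_mul]
  exact Finset.sum_comm

theorem ptraceLeft_mul_one_kronecker [DecidableEq d₁] (M : Matrix (d₁ × d₂) (d₁ × d₂) ℂ)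
    (A : Matrix d₂ d₂ ℂ) : ptraceLeft (M * (1 ⊗ₖ A)) = ptraceLeft M * A := by
  ext i j
  simp [ptraceLeft, mul_apply, Fintype.sum_prod_type, one_apply, Finset.sum_mul]
  exact Finset.sum_comm

theorem ptraceRight_kronecker_one_mul [DecidableEq d₂] (M : Matrix (d₁ × d₂) (d₁ × d₂) ℂ)
    (A : Matrix d₁ d₁ ℂ) : ptraceRight ((A ⊗ₖ 1) * M) = A * ptraceRight M := by
  ext i j
  simp only [ptraceRight, of_apply, mul_apply, Fintype.sum_prod_type, kroneckerMap_apply,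
    one_apply, mul_ite, mul_one, mul_zero, ite_mul, zero_mul, Finset.sum_ite_eq, Finset.mem_univ,
    if_true, Finset.mul_sum]
  exact Finset.sum_comm

theorem ptraceLeft_one_kronecker_mul [DecidableEq d₁] (M : Matrix (d₁ × d₂) (d₁ × d₂) ℂ)
    (A : Matrix d₂ d₂ ℂ) : ptraceLeft ((1 ⊗ₖ A) * M) = A * ptraceLeft M := by
  ext i j
  simp [ptraceLeft, mul_apply, Fintype.sum_prod_type, one_apply, Finset.mul_sum]
  exact Finset.sum_comm

theorem ptraceRight_one_kronecker_mul [DecidableEq d₁] (M : Matrix (d₁ × d₂) (d₁ × d₂) ℂ)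
    (B : Matrix d₂ d₂ ℂ) : ptraceRight ((1 ⊗ₖ B) * M) = ptraceRight (M * (1 ⊗ₖ B)) := by
  ext i j
  simp [ptraceRight, mul_apply, Fintype.sum_prod_type, one_apply, ite_mul]
  rw [Finset.sum_comm]
  simp_rw [mul_comm]

theorem ptraceLeft_kronecker_one_mul [DecidableEq d₂] (M : Matrix (d₁ × d₂) (d₁ × d₂) ℂ)
    (B : Matrix d₁ d₁ ℂ) : ptraceLeft ((B ⊗ₖ 1) * M) = ptraceLeft (M * (B ⊗ₖ 1)) := by
  ext i j
  simp [ptraceLeft, mul_apply, Fintype.sum_prod_type, one_apply, ite_mul]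
  rw [Finset.sum_comm]
  simp_rw [mul_comm]

variable [DecidableEq d₁] [DecidableEq d₂]

theorem ptraceRight_star_kronecker_mul_mul_kronecker (M : Matrix (d₁ × d₂) (d₁ × d₂) ℂ)
    (A : Matrix d₁ d₁ ℂ) {U : Matrix d₂ d₂ ℂ} (hU : U ∈ unitaryGroup d₂ ℂ) :
    ptraceRight (star (A ⊗ₖ U) * M * (A ⊗ₖ U)) = star A * ptraceRight M * A := by
  have hsplit : star (A ⊗ₖ U) * M * (A ⊗ₖ U) =
      (star A ⊗ₖ 1) * ((1 ⊗ₖ star U) * (M * (1 ⊗ₖ U))) * (A ⊗ₖ 1) := by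
    have hstar : star A ⊗ₖ star U = (star A ⊗ₖ 1) * (1 ⊗ₖ star U) := by
      rw [← mul_kronecker_mul, mul_one, one_mul]
    have hAU : A ⊗ₖ U = (1 ⊗ₖ U) * (A ⊗ₖ 1) := by rw [← mul_kronecker_mul, mul_one, one_mul]
    rw [star_kronecker, hstar, hAU]
    simp only [mul_assoc]
  rw [hsplit, ptraceRight_mul_kronecker_one, ptraceRight_kronecker_one_mul,
    ptraceRight_one_kronecker_mul, mul_assoc M, ← mul_kronecker_mul, one_mul,
    Unitary.mul_star_self_of_mem hU, one_kronecker_one, mul_one]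

theorem ptraceLeft_star_kronecker_mul_mul_kronecker (M : Matrix (d₁ × d₂) (d₁ × d₂) ℂ)
    {U : Matrix d₁ d₁ ℂ} (hU : U ∈ unitaryGroup d₁ ℂ) (A : Matrix d₂ d₂ ℂ) :
    ptraceLeft (star (U ⊗ₖ A) * M * (U ⊗ₖ A)) = star A * ptraceLeft M * A := by
  have hsplit : star (U ⊗ₖ A) * M * (U ⊗ₖ A) =
      (1 ⊗ₖ star A) * ((star U ⊗ₖ 1) * (M * (U ⊗ₖ 1))) * (1 ⊗ₖ A) := by
    have hstar : star U ⊗ₖ star A = (1 ⊗ₖ star A) * (star U ⊗ₖ 1) := by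
      rw [← mul_kronecker_mul, mul_one, one_mul]
    have hUA : U ⊗ₖ A = (U ⊗ₖ 1) * (1 ⊗ₖ A) := by rw [← mul_kronecker_mul, mul_one, one_mul]
    rw [star_kronecker, hstar, hUA]
    simp only [mul_assoc]
  rw [hsplit, ptraceLeft_mul_one_kronecker, ptraceLeft_one_kronecker_mul,
    ptraceLeft_kronecker_one_mul, mul_assoc M, ← mul_kronecker_mul, one_mul,
    Unitary.mul_star_self_of_mem hU, one_kronecker_one, mul_one]

end PartialTrace

section Entropy

variable {d₁ d₂ : Type*} [Fintype d₁] [DecidableEq d₁] [Fintype d₂] [DecidableEq d₂]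

theorem kronecker_conj_diagonal (U₁ : Matrix d₁ d₁ ℂ) (U₂ : Matrix d₂ d₂ ℂ) (a : d₁ → ℂ)
    (b : d₂ → ℂ) :
    (U₁ * diagonal a * star U₁) ⊗ₖ (U₂ * diagonal b * star U₂) =
      (U₁ ⊗ₖ U₂) * diagonal (fun q => a q.1 * b q.2) * star (U₁ ⊗ₖ U₂) := by
  rw [mul_kronecker_mul, mul_kronecker_mul, diagonal_kronecker_diagonal, star_kronecker]

theorem mlog_kronecker {σ₁ : Matrix d₁ d₁ ℂ} {σ₂ : Matrix d₂ d₂ ℂ} (h₁ : σ₁.PosDef)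
    (h₂ : σ₂.PosDef) : mlog (σ₁ ⊗ₖ σ₂) = mlog σ₁ ⊗ₖ 1 + 1 ⊗ₖ mlog σ₂ := by
  set U₁ : Matrix d₁ d₁ ℂ := ↑h₁.isHermitian.eigenvectorUnitary
  set U₂ : Matrix d₂ d₂ ℂ := ↑h₂.isHermitian.eigenvectorUnitary
  set e₁ := h₁.isHermitian.eigenvalues
  set e₂ := h₂.isHermitian.eigenvalues
  have hU₁ : U₁ ∈ unitaryGroup d₁ ℂ := h₁.isHermitian.eigenvectorUnitary.2
  have hU₂ : U₂ ∈ unitaryGroup d₂ ℂ := h₂.isHermitian.eigenvectorUnitary.2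
  have hlog₁ : mlog σ₁ = U₁ * diagonal (fun i => (Real.log (e₁ i) : ℂ)) * star U₁ := by
    rw [mlog, dif_pos h₁.isHermitian]
  have hlog₂ : mlog σ₂ = U₂ * diagonal (fun i => (Real.log (e₂ i) : ℂ)) * star U₂ := by
    rw [mlog, dif_pos h₂.isHermitian]
  have hone₁ : (1 : Matrix d₁ d₁ ℂ) = U₁ * diagonal (fun _ => 1) * star U₁ := by
    rw [diagonal_one, mul_one, Unitary.mul_star_self_of_mem hU₁]
  have hone₂ : (1 : Matrix d₂ d₂ ℂ) = U₂ * diagonal (fun _ => 1) * star U₂ := by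
    rw [diagonal_one, mul_one, Unitary.mul_star_self_of_mem hU₂]
  have hlog_mul (q : d₁ × d₂) :
      Real.log (e₁ q.1 * e₂ q.2) = Real.log (e₁ q.1) + Real.log (e₂ q.2) :=
    Real.log_mul (h₁.eigenvalues_pos q.1).ne' (h₂.eigenvalues_pos q.2).ne'
  calc mlog (σ₁ ⊗ₖ σ₂)
      = mlog ((U₁ ⊗ₖ U₂) * diagonal (fun q => ((e₁ q.1 * e₂ q.2 : ℝ) : ℂ)) *
          star (U₁ ⊗ₖ U₂)) := by
        rw [h₁.isHermitian.eq_conj_diagonal_eigenvalues,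
          h₂.isHermitian.eq_conj_diagonal_eigenvalues, kronecker_conj_diagonal]
        push_cast
        rfl
    _ = (U₁ ⊗ₖ U₂) * diagonal (fun q => (Real.log (e₁ q.1 * e₂ q.2) : ℂ)) * star (U₁ ⊗ₖ U₂) :=
        mlog_conj_diagonal (kronecker_mem_unitary hU₁ hU₂) _
    _ = mlog σ₁ ⊗ₖ 1 + 1 ⊗ₖ mlog σ₂ := by
        rw [hlog₁, hlog₂, hone₁, hone₂, kronecker_conj_diagonal, kronecker_conj_diagonal,
          ← add_mul, ← mul_add, diagonal_add]
        simp only [hlog_mul, Complex.ofReal_add, mul_one, one_mul]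

theorem relEnt_eq_neg_vnEnt_sub {n : Type*} [Fintype n] [DecidableEq n] (ρ σ : Matrix n n ℂ) :
    relEnt ρ σ = -vnEnt ρ - (ρ * mlog σ).trace.re := by
  rw [relEnt, vnEnt, trace_sub, Complex.sub_re, neg_neg]

theorem relEnt_kronecker (ρ : Matrix (d₁ × d₂) (d₁ × d₂) ℂ) {σ₁ : Matrix d₁ d₁ ℂ}
    {σ₂ : Matrix d₂ d₂ ℂ} (h₁ : σ₁.PosDef) (h₂ : σ₂.PosDef) :
    relEnt ρ (σ₁ ⊗ₖ σ₂) = -vnEnt ρ - (ptraceRight ρ * mlog σ₁).trace.re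
      - (ptraceLeft ρ * mlog σ₂).trace.re := by
  rw [relEnt_eq_neg_vnEnt_sub, mlog_kronecker h₁ h₂, mul_add, trace_add, Complex.add_re,
    ← trace_ptraceRight (ρ * _), ptraceRight_mul_kronecker_one,
    ← trace_ptraceLeft (ρ * (1 ⊗ₖ _)), ptraceLeft_mul_one_kronecker]
  ring

theorem vnEnt_le_vnEnt_ptraceRight_add_vnEnt_ptraceLeft {ρ : Matrix (d₁ × d₂) (d₁ × d₂) ℂ}
    (hρ : IsDensity ρ) : vnEnt ρ ≤ vnEnt (ptraceRight ρ) + vnEnt (ptraceLeft ρ) := by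
  obtain ⟨hpsd, htr⟩ := hρ
  set h₁ := hpsd.ptraceRight.isHermitian
  set h₂ := hpsd.ptraceLeft.isHermitian
  set U₁ : Matrix d₁ d₁ ℂ := ↑h₁.eigenvectorUnitary
  set U₂ : Matrix d₂ d₂ ℂ := ↑h₂.eigenvectorUnitary
  have hU₁ : U₁ ∈ unitaryGroup d₁ ℂ := h₁.eigenvectorUnitary.2
  have hU₂ : U₂ ∈ unitaryGroup d₂ ℂ := h₂.eigenvectorUnitary.2
  set B := star (U₁ ⊗ₖ U₂) * ρ * (U₁ ⊗ₖ U₂)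
  have hmarg₁ (i : d₁) : ∑ j, (B (i, j) (i, j)).re = h₁.eigenvalues i := by
    have h := congr_fun₂ (ptraceRight_star_kronecker_mul_mul_kronecker ρ U₁ hU₂) i i
    rw [h₁.star_eigenvectorUnitary_mul_mul] at h
    simpa [ptraceRight, ← Complex.re_sum] using congr_arg Complex.re h
  have hmarg₂ (j : d₂) : ∑ i, (B (i, j) (i, j)).re = h₂.eigenvalues j := by
    have h := congr_fun₂ (ptraceLeft_star_kronecker_mul_mul_kronecker ρ hU₁ U₂) j j
    rw [h₂.star_eigenvectorUnitary_mul_mul] at h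
    simpa [ptraceLeft, ← Complex.re_sum] using congr_arg Complex.re h
  have hp : 0 ≤ fun q => (B q q).re := fun q =>
    (Complex.nonneg_iff.mp (hpsd.conjTranspose_mul_mul_same (U₁ ⊗ₖ U₂)).diag_nonneg).1
  have hsum₁ : ∑ i, (h₁.eigenvalues i : ℂ) = 1 := by
    rw [← htr, ← trace_ptraceRight]
    exact h₁.trace_eq_sum_eigenvalues.symm
  have hsum₂ : ∑ j, (h₂.eigenvalues j : ℂ) = 1 := by
    rw [← htr, ← trace_ptraceLeft]
    exact h₂.trace_eq_sum_eigenvalues.symm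
  have klein := sum_re_diag_conj_mul_log_le hpsd (kronecker_mem_unitary hU₁ hU₂)
    (t := fun q => h₁.eigenvalues q.1 * h₂.eigenvalues q.2)
    (fun q => mul_nonneg (hpsd.ptraceRight.eigenvalues_nonneg _)
      (hpsd.ptraceLeft.eigenvalues_nonneg _))
    (by simp only [Complex.ofReal_mul, Fintype.sum_prod_type, ← Finset.mul_sum, hsum₁, hsum₂,
      mul_one, htr])
    fun q => eq_zero_of_mul_marginals_eq_zero hp hmarg₁ hmarg₂
  rw [sum_mul_log_mul_marginals hp hmarg₁ hmarg₂] at klein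
  rw [vnEnt, vnEnt, vnEnt, h₁.re_trace_mul_mlog_self, h₂.re_trace_mul_mlog_self]
  linarith

end Entropy

theorem relEnt_superadditive
    {d₁ d₂ : Type} [Fintype d₁] [DecidableEq d₁] [Fintype d₂] [DecidableEq d₂]
    (ρ₁₂ : Matrix (d₁ × d₂) (d₁ × d₂) ℂ) (hρ₁₂ : IsDensity ρ₁₂)
    (σ₁ : Matrix d₁ d₁ ℂ) (σ₂ : Matrix d₂ d₂ ℂ)
    (hσ₁ : IsFaithfulState σ₁) (hσ₂ : IsFaithfulState σ₂) :
    relEnt (ptraceRight ρ₁₂) σ₁ + relEnt (ptraceLeft ρ₁₂) σ₂ ≤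
      relEnt ρ₁₂ (σ₁ ⊗ₖ σ₂) := by
  rw [relEnt_kronecker ρ₁₂ hσ₁.1 hσ₂.1, relEnt_eq_neg_vnEnt_sub, relEnt_eq_neg_vnEnt_sub]
  linarith [vnEnt_le_vnEnt_ptraceRight_add_vnEnt_ptraceLeft hρ₁₂]

end
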